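/- For every b ≥ 1, the diagonal increment satisfies the recursion B(b) = 1 + γ·λ0·A(b) + γ·(1−λ0)·B(b+1). -/

import Mathlib

/-- Action-value for sensing (`u = 0`). -/
noncomputable def Q0 (γ lam0 c0 : ℝ) (V : ℕ → ℕ → ℝ) (m b : ℕ) : ℝ :=
  (m : ℝ) + c0 + γ * (lam0 * V (m + 1) 1 + (1 - lam0) * V (m + 1) (b + 1))

/-- Action-value for communication (`u = 1`). -/
noncomputable def Q1 (γ lam1 c1 : ℝ) (V : ℕ → ℕ → ℝ) (m b : ℕ) : ℝ :=
  (m : ℝ) + c1 + γ * (lam1 * V (b + 1) (b + 1) + (1 - lam1) * V (m + 1) (b + 1))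

/-- Action-value for joint sensing and communication (`u = 2`). -/
noncomputable def Q2 (γ lam2 c2 : ℝ) (V : ℕ → ℕ → ℝ) (m b : ℕ) : ℝ :=
  (m : ℝ) + c2 + γ * (lam2 * V (b + 1) 1 + (1 - lam2) * V (m + 1) (b + 1))

/-- The Bellman operator `T`. -/
noncomputable def Tbell (γ lam0 lam1 lam2 c0 c1 c2 : ℝ) (V : ℕ → ℕ → ℝ) (m b : ℕ) : ℝ :=
  min (Q0 γ lam0 c0 V m b) (min (Q1 γ lam1 c1 V m b) (Q2 γ lam2 c2 V m b))

/-!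
At a diagonal state `(b, b)` communicating gains nothing (`Q1` averages `V★(b+1, b+1)` with
itself), and the cost/probability orderings make sensing optimal as soon as
`V★(b+1, 1) ≤ V★(b+1, b+1)`. This monotonicity of `V★` holds because `T` preserves
monotonicity on `S` and, being a `γρ`-contraction for the weight `ρ ^ m`, drives value
iteration to `V★` pointwise. Subtracting the sensing Bellman equations at `(b, b)` and
`(b+1, b+1)` then gives the recursion.
-/

open Set Filter Topology

/-- Each `Qᵢ γ λ c V m b` is definitionally `actionValue γ λ c m p q`, where `p` is the successor
value on success and `q = V (m+1) (b+1)` the one on failure. -/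
def actionValue (γ l c : ℝ) (m : ℕ) (p q : ℝ) : ℝ :=
  m + c + γ * (l * p + (1 - l) * q)

section ActionValue

variable {γ l c : ℝ}

lemma actionValue_mono (hγ : 0 ≤ γ) (hl : l ∈ Icc 0 1) {m m' : ℕ} {p q p' q' : ℝ}
    (hm : m ≤ m') (hp : p ≤ p') (hq : q ≤ q') :
    actionValue γ l c m p q ≤ actionValue γ l c m' p' q' := by
  obtain ⟨hl0, hl1⟩ := hl
  have hl' : 0 ≤ 1 - l := sub_nonneg.2 hl1
  have hm' : (m : ℝ) ≤ m' := by exact_mod_cast hm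
  unfold actionValue
  gcongr

lemma abs_actionValue_sub_le (hγ : 0 ≤ γ) (hl : l ∈ Icc 0 1) (m : ℕ) {p q p' q' K : ℝ}
    (hp : |p - p'| ≤ K) (hq : |q - q'| ≤ K) :
    |actionValue γ l c m p q - actionValue γ l c m p' q'| ≤ γ * K := by
  obtain ⟨hl0, hl1⟩ := hl
  have hl' : 0 ≤ 1 - l := sub_nonneg.2 hl1
  have hdiff : actionValue γ l c m p q - actionValue γ l c m p' q'
      = γ * (l * (p - p') + (1 - l) * (q - q')) := by
    unfold actionValue; ring
  rw [hdiff, abs_mul, abs_of_nonneg hγ]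
  gcongr
  calc |l * (p - p') + (1 - l) * (q - q')|
      ≤ l * |p - p'| + (1 - l) * |q - q'| := by
        refine (abs_add_le _ _).trans_eq ?_
        rw [abs_mul, abs_mul, abs_of_nonneg hl0, abs_of_nonneg hl']
    _ ≤ l * K + (1 - l) * K := by gcongr
    _ = K := by ring

end ActionValue

def StateMonotone (V : ℕ → ℕ → ℝ) : Prop :=
  ∀ ⦃m b m' b' : ℕ⦄, 1 ≤ b → b ≤ b' → b ≤ m → m ≤ m' → b' ≤ m' → V m b ≤ V m' b'

lemma StateMonotone.of_tendsto {F : ℕ → ℕ → ℕ → ℝ} {V : ℕ → ℕ → ℝ}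
    (hF : ∀ n, StateMonotone (F n))
    (hlim : ∀ m b, 1 ≤ b → b ≤ m → Tendsto (fun n => F n m b) atTop (𝓝 (V m b))) :
    StateMonotone V :=
  fun _ _ _ _ hb hbb' hbm hmm' hbm' =>
    le_of_tendsto_of_tendsto' (hlim _ _ hb hbm) (hlim _ _ (hb.trans hbb') hbm')
      fun n => hF n hb hbb' hbm hmm' hbm'

section Bellman

variable {γ lam0 lam1 lam2 c0 c1 c2 : ℝ}

lemma Tbell_stateMonotone (hγ : 0 ≤ γ) (h0 : lam0 ∈ Icc 0 1) (h1 : lam1 ∈ Icc 0 1)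
    (h2 : lam2 ∈ Icc 0 1) {V : ℕ → ℕ → ℝ} (hV : StateMonotone V) :
    StateMonotone (Tbell γ lam0 lam1 lam2 c0 c1 c2 V) := by
  intro m b m' b' hb hbb' hbm hmm' hbm'
  have hm1 : V (m + 1) 1 ≤ V (m' + 1) 1 := hV le_rfl le_rfl (by omega) (by omega) (by omega)
  have hmb : V (m + 1) (b + 1) ≤ V (m' + 1) (b' + 1) :=
    hV (by omega) (by omega) (by omega) (by omega) (by omega)
  have hbb : V (b + 1) (b + 1) ≤ V (b' + 1) (b' + 1) :=
    hV (by omega) (by omega) le_rfl (by omega) le_rfl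
  have hb1 : V (b + 1) 1 ≤ V (b' + 1) 1 := hV le_rfl le_rfl (by omega) (by omega) (by omega)
  exact min_le_min (actionValue_mono hγ h0 hmm' hm1 hmb)
    (min_le_min (actionValue_mono hγ h1 hmm' hbb hmb) (actionValue_mono hγ h2 hmm' hb1 hmb))

lemma stateMonotone_iterate_Tbell (hγ : 0 ≤ γ) (h0 : lam0 ∈ Icc 0 1) (h1 : lam1 ∈ Icc 0 1)
    (h2 : lam2 ∈ Icc 0 1) {W : ℕ → ℕ → ℝ} (hW : StateMonotone W) (n : ℕ) :
    StateMonotone ((Tbell γ lam0 lam1 lam2 c0 c1 c2)^[n] W) := by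
  induction n with
  | zero => exact hW
  | succ n ih =>
    rw [Function.iterate_succ_apply']
    exact Tbell_stateMonotone hγ h0 h1 h2 ih

/-- `‖T V - T W‖_w ≤ γρ ‖V - W‖_w`, stated pointwise on `S`. -/
lemma Tbell_weighted_contraction (hγ : 0 ≤ γ) (h0 : lam0 ∈ Icc 0 1) (h1 : lam1 ∈ Icc 0 1)
    (h2 : lam2 ∈ Icc 0 1) {ρ K : ℝ} (hρ : 1 ≤ ρ) {V W : ℕ → ℕ → ℝ}
    (hVW : ∀ m b, 1 ≤ b → b ≤ m → |V m b - W m b| ≤ K * ρ ^ m) :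
    ∀ m b, 1 ≤ b → b ≤ m →
      |Tbell γ lam0 lam1 lam2 c0 c1 c2 V m b - Tbell γ lam0 lam1 lam2 c0 c1 c2 W m b|
        ≤ γ * ρ * K * ρ ^ m := by
  intro m b hb hbm
  have hK : 0 ≤ K :=
    nonneg_of_mul_nonneg_left ((abs_nonneg _).trans (hVW 1 1 le_rfl le_rfl)) (by positivity)
  have succ_le : ∀ x y, 1 ≤ y → y ≤ x → x ≤ m + 1 → |V x y - W x y| ≤ K * ρ ^ (m + 1) :=
    fun x y hy hyx hx => (hVW x y hy hyx).trans (by gcongr)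
  have hm1 := succ_le (m + 1) 1 le_rfl (by omega) le_rfl
  have hmb := succ_le (m + 1) (b + 1) (by omega) (by omega) le_rfl
  have hbb := succ_le (b + 1) (b + 1) (by omega) le_rfl (by omega)
  have hb1 := succ_le (b + 1) 1 le_rfl (by omega) (by omega)
  calc _ ≤ γ * (K * ρ ^ (m + 1)) :=
        (abs_min_sub_min_le_max _ _ _ _).trans <| max_le (abs_actionValue_sub_le hγ h0 m hm1 hmb) <|
          (abs_min_sub_min_le_max _ _ _ _).trans <| max_le
            (abs_actionValue_sub_le hγ h1 m hbb hmb) (abs_actionValue_sub_le hγ h2 m hb1 hmb)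
    _ = γ * ρ * K * ρ ^ m := by ring

lemma tendsto_iterate_Tbell (hγ : 0 ≤ γ) (h0 : lam0 ∈ Icc 0 1) (h1 : lam1 ∈ Icc 0 1)
    (h2 : lam2 ∈ Icc 0 1) {ρ : ℝ} (hρ : 1 ≤ ρ) (hγρ : γ * ρ < 1) {V W : ℕ → ℕ → ℝ}
    (hVW : ∃ C, ∀ m b, 1 ≤ b → b ≤ m → |V m b - W m b| ≤ C * ρ ^ m)
    (hfix : ∀ m b, 1 ≤ b → b ≤ m → V m b = Tbell γ lam0 lam1 lam2 c0 c1 c2 V m b) :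
    ∀ m b, 1 ≤ b → b ≤ m →
      Tendsto (fun n => ((Tbell γ lam0 lam1 lam2 c0 c1 c2)^[n] W) m b) atTop (𝓝 (V m b)) := by
  obtain ⟨C, hC⟩ := hVW
  have herr : ∀ n m b, 1 ≤ b → b ≤ m →
      |V m b - ((Tbell γ lam0 lam1 lam2 c0 c1 c2)^[n] W) m b| ≤ (γ * ρ) ^ n * C * ρ ^ m := by
    intro n
    induction n with
    | zero => simpa using hC
    | succ n ih =>
      intro m b hb hbm
      rw [hfix m b hb hbm, Function.iterate_succ_apply', pow_succ', mul_assoc (γ * ρ)]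
      exact Tbell_weighted_contraction hγ h0 h1 h2 hρ ih m b hb hbm
  intro m b hb hbm
  rw [tendsto_iff_norm_sub_tendsto_zero]
  refine squeeze_zero (fun n => norm_nonneg _) (g := fun n => (γ * ρ) ^ n * C * ρ ^ m)
    (fun n => ?_) ?_
  · rw [Real.norm_eq_abs, abs_sub_comm]
    exact herr n m b hb hbm
  · simpa using ((tendsto_pow_atTop_nhds_zero_of_lt_one (by positivity) hγρ).mul_const C).mul_const
      (ρ ^ m)

lemma stateMonotone_of_fixed_Tbell (hγ : 0 ≤ γ) (h0 : lam0 ∈ Icc 0 1) (h1 : lam1 ∈ Icc 0 1)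
    (h2 : lam2 ∈ Icc 0 1) {ρ : ℝ} (hρ : 1 ≤ ρ) (hγρ : γ * ρ < 1) {V : ℕ → ℕ → ℝ}
    (hV : ∃ C, ∀ m b, 1 ≤ b → b ≤ m → |V m b| ≤ C * ρ ^ m)
    (hfix : ∀ m b, 1 ≤ b → b ≤ m → V m b = Tbell γ lam0 lam1 lam2 c0 c1 c2 V m b) :
    StateMonotone V :=
  StateMonotone.of_tendsto
    (stateMonotone_iterate_Tbell hγ h0 h1 h2 (fun _ _ _ _ _ _ _ _ _ => le_rfl))
    (tendsto_iterate_Tbell hγ h0 h1 h2 hρ hγρ (W := 0) (by simpa using hV) hfix)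

lemma Tbell_diag_eq_Q0 (hγ : 0 ≤ γ) (hl0 : 0 ≤ lam0) (hl20 : lam2 ≤ lam0) (hc01 : c0 ≤ c1)
    (hc12 : c1 ≤ c2) {V : ℕ → ℕ → ℝ} (b : ℕ) (hV : V (b + 1) 1 ≤ V (b + 1) (b + 1)) :
    Tbell γ lam0 lam1 lam2 c0 c1 c2 V b b = Q0 γ lam0 c0 V b b := by
  have hgap : 0 ≤ γ * (V (b + 1) (b + 1) - V (b + 1) 1) := mul_nonneg hγ (sub_nonneg.2 hV)
  refine min_eq_left (le_min ?_ ?_) <;> simp only [Q0, Q1, Q2] <;>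
    linarith [mul_nonneg hl0 hgap, mul_nonneg (sub_nonneg.2 hl20) hgap]

end Bellman

theorem diagonal_increment_recursion_general
    (γ lam0 lam1 lam2 c0 c1 c2 ρ : ℝ)
    (hγ0 : 0 < γ)
    (hl0 : 0 < lam0) (hl0' : lam0 < 1)
    (hl1 : 0 < lam1) (hl1' : lam1 < 1)
    (hl2 : 0 < lam2) (hl2' : lam2 < 1)
    (hord1 : lam2 ≤ lam0)
    (hord3 : c0 ≤ c1) (hord4 : c1 ≤ c2)
    (hρ1 : 1 < ρ) (hρ2 : ρ < 1 / γ)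
    (Vstar : ℕ → ℕ → ℝ)
    (hnorm : ∃ C : ℝ, ∀ m b : ℕ, 1 ≤ b → b ≤ m → |Vstar m b| ≤ C * ρ ^ m)
    (hfix : ∀ m b : ℕ, 1 ≤ b → b ≤ m →
      Vstar m b = Tbell γ lam0 lam1 lam2 c0 c1 c2 Vstar m b) :
    ∀ b : ℕ, 1 ≤ b →
      Vstar (b + 1) (b + 1) - Vstar b b =
        1 + γ * lam0 * (Vstar (b + 2) 1 - Vstar (b + 1) 1) +
          γ * (1 - lam0) * (Vstar (b + 2) (b + 2) - Vstar (b + 1) (b + 1)) := by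
  have hγρ : γ * ρ < 1 := by rwa [lt_div_iff₀ hγ0, mul_comm] at hρ2
  have hmono : StateMonotone Vstar :=
    stateMonotone_of_fixed_Tbell hγ0.le ⟨hl0.le, hl0'.le⟩ ⟨hl1.le, hl1'.le⟩ ⟨hl2.le, hl2'.le⟩
      hρ1.le hγρ hnorm hfix
  have hdiag : ∀ b, 1 ≤ b → Vstar b b = Q0 γ lam0 c0 Vstar b b := fun b hb =>
    (hfix b b hb le_rfl).trans <| Tbell_diag_eq_Q0 hγ0.le hl0.le hord1 hord3 hord4 b <|
      hmono le_rfl (by omega) (by omega) le_rfl le_rfl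
  intro b hb
  have hb0 := hdiag b hb
  have hb1 := hdiag (b + 1) (by omega)
  simp only [Q0, show b + 1 + 1 = b + 2 from rfl] at hb0 hb1
  push_cast at hb0 hb1 ⊢
  linear_combination hb1 - hb0

/-- The diagonal increment `B(b) = V★(b+1,b+1) − V★(b,b)` satisfies the
recursion `B(b) = 1 + γλ0·A(b) + γ(1−λ0)·B(b+1)`, where `A(b) = V★(b+2,1) − V★(b+1,1)`. -/
theorem diagonal_increment_recursion
    (γ lam0 lam1 lam2 c0 c1 c2 ρ : ℝ)
    (hγ0 : 0 < γ) (hγ1 : γ < 1)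
    (hl0 : 0 < lam0) (hl0' : lam0 < 1)
    (hl1 : 0 < lam1) (hl1' : lam1 < 1)
    (hl2 : 0 < lam2) (hl2' : lam2 < 1)
    (hc0 : 0 ≤ c0) (hc1 : 0 ≤ c1) (hc2 : 0 ≤ c2)
    (hord1 : lam2 ≤ lam0) (hord2 : lam0 ≤ lam1)
    (hord3 : c0 ≤ c1) (hord4 : c1 ≤ c2)
    (hρ1 : 1 < ρ) (hρ2 : ρ < 1 / γ)
    (Vstar : ℕ → ℕ → ℝ)
    (hnorm : ∃ C : ℝ, ∀ m b : ℕ, 1 ≤ b → b ≤ m → |Vstar m b| ≤ C * ρ ^ m)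
    (hfix : ∀ m b : ℕ, 1 ≤ b → b ≤ m →
      Vstar m b = Tbell γ lam0 lam1 lam2 c0 c1 c2 Vstar m b) :
    ∀ b : ℕ, 1 ≤ b →
      Vstar (b + 1) (b + 1) - Vstar b b =
        1 + γ * lam0 * (Vstar (b + 2) 1 - Vstar (b + 1) 1) +
          γ * (1 - lam0) * (Vstar (b + 2) (b + 2) - Vstar (b + 1) (b + 1)) :=
  diagonal_increment_recursion_general γ lam0 lam1 lam2 c0 c1 c2 ρ hγ0 hl0 hl0' hl1 hl1' hl2 hl2'
    hord1 hord3 hord4 hρ1 hρ2 Vstar hnorm hfix
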